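/- arXiv:2501.04243 — 2 statements merged into one kernel-verified Lean document; each statement's English description precedes it below -/
import Mathlib

section
/- In the common priority model, under the Reveal policy where each student observes his own lottery number, the strategy profile where each student i with π(i) in the k-th lottery block reports s_k first is a Nash equilibrium of the induced complete-information game (for the realized lottery), and it yields the assignment where every student is matched to his block school; moreover no student can obtain a better school by a unilateral deviation. -/
/-!
Write `L k = ∑_{y < k} q y`, so that block `k` is `[L k, L k + q k)`. A student of block `k` is
admitted at `s_k`: the applicants there with priority at least his hold distinct numbers among
`L k, …, π i`, which are at most `q k`. Since the capacities sum to `n` and `π` is a bijection, every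
number of block `j` is held by some student, so all `q j` students of a better block `j` apply to
`s_j` ahead of a deviator, who is rejected; a deviation to a worse school yields at most its lower
utility.
-/

open Classical in
/-- A student `i` is admitted when each student reports a single school
according to `r` and each school admits its `q s` highest-priority applicants
(smaller lottery number = higher priority): `i` is admitted iff the number of
applicants to his school with weakly better lottery numbers is at most the
capacity. -/
noncomputable def isAdmitted {n m : ℕ} (q : Fin m → ℕ) (π : Equiv.Perm (Fin n))
    (r : Fin n → Fin m) (i : Fin n) : Prop :=
  (Finset.univ.filter (fun j : Fin n => r j = r i ∧ (π j : ℕ) ≤ (π i : ℕ))).card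
    ≤ q (r i)

open Classical in
/-- Payoff: the utility of the reported school if admitted, 0 otherwise. -/
noncomputable def payoff {n m : ℕ} (q : Fin m → ℕ) (π : Equiv.Perm (Fin n))
    (u : Fin m → ℝ) (r : Fin n → Fin m) (i : Fin n) : ℝ :=
  if isAdmitted q π r i then u (r i) else 0

open Finset

section Blocks

variable {m : ℕ} (q : Fin m → ℕ)

def blockStart (s : Fin m) : ℕ :=
  ∑ y ∈ univ.filter (· < s), q y

def lotteryBlock (s : Fin m) : Finset ℕ :=
  Ico (blockStart q s) (blockStart q s + q s)

theorem sum_filter_le_eq_blockStart_add (s : Fin m) :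
    ∑ y ∈ univ.filter (· ≤ s), q y = blockStart q s + q s := by
  rw [blockStart, filter_ge_eq_Iic, filter_gt_eq_Iio, ← Iio_insert, sum_insert (by simp),
    add_comm]

theorem blockStart_add_le_of_lt {s t : Fin m} (h : s < t) :
    blockStart q s + q s ≤ blockStart q t := by
  rw [← sum_filter_le_eq_blockStart_add]
  exact sum_le_sum_of_subset fun y hy => by
    simp only [mem_filter, mem_univ, true_and] at hy ⊢
    exact hy.trans_lt h

theorem blockStart_add_le_sum (s : Fin m) : blockStart q s + q s ≤ ∑ y, q y := by
  rw [← sum_filter_le_eq_blockStart_add]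
  exact sum_le_sum_of_subset (subset_univ _)

theorem eq_of_mem_lotteryBlock {s t : Fin m} {x : ℕ} (hs : x ∈ lotteryBlock q s)
    (ht : x ∈ lotteryBlock q t) : s = t := by
  rw [lotteryBlock, mem_Ico] at hs ht
  rcases lt_trichotomy s t with h | h | h
  · exact absurd (blockStart_add_le_of_lt q h) (by omega)
  · exact h
  · exact absurd (blockStart_add_le_of_lt q h) (by omega)

end Blocks

theorem card_filter_perm_val_mem_Ico {n : ℕ} (π : Equiv.Perm (Fin n)) {a b : ℕ} (hb : b ≤ n) :
    #(univ.filter fun j => (π j : ℕ) ∈ Ico a b) = b - a :=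
  calc #(univ.filter fun j => (π j : ℕ) ∈ Ico a b)
      = #(univ.filter fun x : Fin n => (x : ℕ) ∈ Ico a b) := card_equiv π (by simp)
    _ = #((Iio n).filter (· ∈ Ico a b)) := by
        rw [← Fin.map_valEmbedding_univ, filter_map, card_map]; rfl
    _ = b - a := by
        rw [filter_mem_eq_inter, inter_eq_right.mpr, Nat.card_Ico]
        exact fun x hx => mem_Iio.mpr ((mem_Ico.mp hx).2.trans_le hb)

section Admission

variable {n m : ℕ} {q : Fin m → ℕ} {π : Equiv.Perm (Fin n)} {r : Fin n → Fin m} {i : Fin n}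

theorem isAdmitted_of_forall_le {a : ℕ} (ha : ∀ j, r j = r i → a ≤ π j)
    (hi : (π i : ℕ) < a + q (r i)) : isAdmitted q π r i := by
  classical
  have hcard := card_le_card_of_injOn (fun j => (π j : ℕ)) (t := Icc a (π i))
    (s := univ.filter fun j => r j = r i ∧ (π j : ℕ) ≤ π i)
    (fun j hj => by
      simp only [coe_filter, mem_univ, true_and] at hj
      simp [ha j hj.1, hj.2])
    (fun j _ k _ h => π.injective (Fin.ext h))
  rw [Nat.card_Icc] at hcard
  unfold isAdmitted
  convert hcard.trans (show (π i : ℕ) + 1 - a ≤ q (r i) by omega)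

theorem not_isAdmitted_of_le_card (A : Finset (Fin n))
    (hA : ∀ j ∈ A, j ≠ i ∧ r j = r i ∧ (π j : ℕ) ≤ π i) (hcard : q (r i) ≤ #A) :
    ¬ isAdmitted q π r i := by
  classical
  have hsub : insert i A ⊆ univ.filter fun j => r j = r i ∧ (π j : ℕ) ≤ π i := by
    intro j hj
    rcases mem_insert.mp hj with rfl | hj
    · simp
    · exact mem_filter.mpr ⟨mem_univ _, (hA j hj).2⟩
  have hlt := card_le_card hsub
  rw [card_insert_of_notMem fun hi => (hA i hi).1 rfl] at hlt
  unfold isAdmitted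
  convert Nat.not_le.mpr (hcard.trans_lt hlt)

variable (u : Fin m → ℝ)

theorem payoff_of_isAdmitted (h : isAdmitted q π r i) : payoff q π u r i = u (r i) :=
  if_pos h

theorem payoff_of_not_isAdmitted (h : ¬ isAdmitted q π r i) : payoff q π u r i = 0 :=
  if_neg h

theorem payoff_le {c : ℝ} (hc₀ : 0 ≤ c) (hc : u (r i) ≤ c) : payoff q π u r i ≤ c := by
  unfold payoff
  split_ifs
  exacts [hc, hc₀]

end Admission

section BlockProfile

variable {n m : ℕ} {q : Fin m → ℕ} {π : Equiv.Perm (Fin n)} {σ : Fin n → Fin m}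

theorem isAdmitted_of_mem_lotteryBlock (hσ : ∀ i, (π i : ℕ) ∈ lotteryBlock q (σ i))
    (i : Fin n) : isAdmitted q π σ i :=
  isAdmitted_of_forall_le (fun j hj => hj ▸ (mem_Ico.mp (hσ j)).1) (mem_Ico.mp (hσ i)).2

theorem not_isAdmitted_update_of_lt (hq : ∑ s, q s = n)
    (hσ : ∀ i, (π i : ℕ) ∈ lotteryBlock q (σ i)) {i : Fin n} {s : Fin m} (hs : s < σ i) :
    ¬ isAdmitted q π (Function.update σ i s) i := by
  set block := univ.filter fun j => (π j : ℕ) ∈ lotteryBlock q s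
  have hblock : ∀ j ∈ block, σ j = s := fun j hj =>
    eq_of_mem_lotteryBlock q (hσ j) (mem_filter.mp hj).2
  refine not_isAdmitted_of_le_card block (fun j hj => ?_) ?_
  · have hji : j ≠ i := fun h => hs.ne (h ▸ hblock j hj).symm
    have hπj := (mem_Ico.mp (mem_filter.mp hj).2).2
    have hπi := (mem_Ico.mp (hσ i)).1
    have := blockStart_add_le_of_lt q hs
    refine ⟨hji, by simp [hji, hblock j hj], by omega⟩
  · have hcard : #block = q s :=
      (card_filter_perm_val_mem_Ico π (hq ▸ blockStart_add_le_sum q s)).trans (by omega)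
    rw [Function.update_self, hcard]

end BlockProfile

/-- In the common priority model under the Reveal policy, with
common strictly decreasing positive utilities, a bijective lottery `π` and
capacities summing to `n`, the strategy profile `σ` in which each student with
lottery number in the `k`-th block reports school `k` is a Nash equilibrium of
the induced complete-information game: every student is admitted to his block
school, and no unilateral deviation yields a strictly higher payoff. -/
theorem reveal_block_strategy_nash
    (n m : ℕ) (q : Fin m → ℕ) (hq : ∑ s, q s = n)
    (π : Equiv.Perm (Fin n))
    (u : Fin m → ℝ) (hu : ∀ j k : Fin m, j < k → u k < u j)
    (hupos : ∀ k : Fin m, 0 < u k)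
    (σ : Fin n → Fin m)
    (hσ : ∀ i : Fin n,
      ∑ y ∈ Finset.univ.filter (fun y => y < σ i), q y ≤ (π i : ℕ) ∧
      (π i : ℕ) < ∑ y ∈ Finset.univ.filter (fun y => y ≤ σ i), q y) :
    (∀ i : Fin n, isAdmitted q π σ i) ∧
    (∀ i : Fin n, ∀ s : Fin m,
      payoff q π u (Function.update σ i s) i ≤ payoff q π u σ i) := by
  have hmem : ∀ i, (π i : ℕ) ∈ lotteryBlock q (σ i) :=
    fun i => mem_Ico.mpr ⟨(hσ i).1, sum_filter_le_eq_blockStart_add q (σ i) ▸ (hσ i).2⟩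
  have hadm := isAdmitted_of_mem_lotteryBlock hmem
  refine ⟨hadm, fun i s => ?_⟩
  rw [payoff_of_isAdmitted u (hadm i)]
  rcases lt_trichotomy s (σ i) with hlt | rfl | hgt
  · rw [payoff_of_not_isAdmitted u (not_isAdmitted_update_of_lt hq hmem hlt)]
    exact (hupos _).le
  · rw [Function.update_eq_self, payoff_of_isAdmitted u (hadm i)]
  · exact payoff_le u (hupos _).le (by rw [Function.update_self]; exact (hu _ _ hgt).le)
end

section
/- In the neighborhood priority continuum model, the equilibrium cutoffs satisfy x_k = (∑_{y=1}^{k} q_{s_y} − ∑_{y=1}^{k} n_{s_y}) / (1 − ∑_{y=1}^{k} n_{s_y}) for each k, and these cutoffs are strictly increasing in k and lie in (0,1] with x_m = 1, under the assumptions that total capacity equals total student mass (∑_{y=1}^{m} q_{s_y} = 1), 0 < n_{s_y} < q_{s_y} for all y, and ∑_{y=1}^m n_{s_y} < 1. -/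
/-- In the neighborhood priority continuum model with total
capacity 1, neighborhood masses `0 < nb y < q y`, and `∑ nb < 1`, the
equilibrium cutoffs `x k = (∑_{y≤k} q y − ∑_{y≤k} nb y)/(1 − ∑_{y≤k} nb y)`
are strictly increasing in `k`, lie in `(0,1]`, and the last cutoff equals 1. -/
theorem continuum_cutoffs
    (m : ℕ) (hm : 0 < m) (q nb : Fin m → ℝ)
    (hq : ∑ y, q y = 1)
    (hnb : ∀ y, 0 < nb y ∧ nb y < q y)
    (hnbsum : ∑ y, nb y < 1)
    (x : Fin m → ℝ)
    (hx : ∀ k : Fin m,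
      x k = (∑ y ∈ Finset.Iic k, q y - ∑ y ∈ Finset.Iic k, nb y)
              / (1 - ∑ y ∈ Finset.Iic k, nb y)) :
    (∀ j k : Fin m, j < k → x j < x k) ∧
    (∀ k : Fin m, 0 < x k ∧ x k ≤ 1) ∧
    x (Fin.last (m - 1) |>.cast (by omega)) = 1 := by
  set Q : Fin m → ℝ := fun k => ∑ y ∈ Finset.Iic k, q y with hQ
  set N : Fin m → ℝ := fun k => ∑ y ∈ Finset.Iic k, nb y with hN
  have hqpos : ∀ y, 0 < q y := fun y => (hnb y).1.trans (hnb y).2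
  have hNltQ : ∀ k, N k < Q k := fun k =>
    Finset.sum_lt_sum_of_nonempty ⟨k, Finset.mem_Iic.mpr le_rfl⟩ (fun y _ => (hnb y).2)
  have hNlt1 : ∀ k, N k < 1 := fun k =>
    lt_of_le_of_lt
      (Finset.sum_le_sum_of_subset_of_nonneg (Finset.subset_univ _)
        (fun y _ _ => (hnb y).1.le)) hnbsum
  have hQle1 : ∀ k, Q k ≤ 1 := fun k => by
    rw [← hq]
    exact Finset.sum_le_sum_of_subset_of_nonneg (Finset.subset_univ _)
      (fun y _ _ => (hqpos y).le)
  have hden : ∀ k, 0 < 1 - N k := fun k => by linarith [hNlt1 k]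
  refine ⟨?_, ?_, ?_⟩
  · intro j k hjk
    have hsub : Finset.Iic j ⊆ Finset.Iic k := Finset.Iic_subset_Iic.mpr hjk.le
    have hkmem : k ∈ Finset.Iic k \ Finset.Iic j := by
      simp [Finset.mem_Iic, not_le.mpr hjk]
    have hne : (Finset.Iic k \ Finset.Iic j).Nonempty := ⟨k, hkmem⟩
    have hQsd : Q k - Q j = ∑ y ∈ Finset.Iic k \ Finset.Iic j, q y := by
      have := Finset.sum_sdiff (f := q) hsub
      simp only [hQ]
      linarith
    have hNsd : N k - N j = ∑ y ∈ Finset.Iic k \ Finset.Iic j, nb y := by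
      have := Finset.sum_sdiff (f := nb) hsub
      simp only [hN]
      linarith
    have hST : N k - N j < Q k - Q j := by
      rw [hQsd, hNsd]
      exact Finset.sum_lt_sum_of_nonempty hne (fun y _ => (hnb y).2)
    have hT : 0 < N k - N j := by
      rw [hNsd]
      exact Finset.sum_pos (fun y _ => (hnb y).1) hne
    rw [hx j, hx k, div_lt_div_iff₀ (hden j) (hden k)]
    nlinarith [mul_pos (hden j) (sub_pos.mpr (lt_of_sub_pos (by linarith : 0 < (Q k - Q j) - (N k - N j)))),
      mul_pos (sub_pos.mpr (hNltQ j)) hT, hden j, hNltQ j, hQle1 j]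
  · intro k
    rw [hx k]
    constructor
    · exact div_pos (by linarith [hNltQ k]) (hden k)
    · rw [div_le_one (hden k)]
      linarith [hQle1 k]
  · set k : Fin m := (Fin.last (m - 1)).cast (by omega) with hk
    have huniv : Finset.Iic k = Finset.univ := by
      apply Finset.eq_univ_iff_forall.mpr
      intro y
      rw [Finset.mem_Iic, Fin.le_def]
      have := y.isLt
      simp [hk, Fin.last]
      omega
    rw [hx k]
    rw [show (∑ y ∈ Finset.Iic k, q y) = 1 by rw [huniv]; exact hq]
    rw [div_self]
    have : (∑ y ∈ Finset.Iic k, nb y) < 1 := hNlt1 k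
    linarith
end
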